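/- Let λ ∈ ℝ, λ ≠ 0, and Δx > 0. Then ∫_{x₀}^{x₀+Δx} e^{−λ²(ξ−c)²} dξ = (√π/(2λ))(erf(λ(x₀+Δx−c)) − erf(λ(x₀−c))), and in particular the two-cell Gaussian-RBF reconstruction coefficient 2λΔx·e^{−λ²Δx²/4} / (√π(erf(λΔx/2) + erf(3λΔx/2))) admits the Taylor expansion 1/2 + λ²Δx²/6 − 7λ⁴Δx⁴/90 + O(Δx⁶) as Δx → 0. -/

import Mathlib

open Real intervalIntegral

/-- The error function `erf z = (2/√π) ∫₀ᶻ e^{−t²} dt`. -/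
noncomputable def erf (z : ℝ) : ℝ := (2 / Real.sqrt π) * ∫ t in (0:ℝ)..z, Real.exp (-t ^ 2)

namespace Stmt16Aux

noncomputable def Ig (z : ℝ) : ℝ := ∫ t in (0:ℝ)..z, Real.exp (-t ^ 2)

lemma contg : Continuous fun t : ℝ => Real.exp (-t ^ 2) :=
  Real.continuous_exp.comp (continuous_pow 2).neg

lemma intg (a b : ℝ) :
    IntervalIntegrable (fun t : ℝ => Real.exp (-t ^ 2)) MeasureTheory.volume a b :=
  contg.intervalIntegrable a b

lemma Ig_sub (a b : ℝ) : ∫ t in a..b, Real.exp (-t ^ 2) = Ig b - Ig a := by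
  have h := intervalIntegral.integral_add_adjacent_intervals (intg 0 a) (intg a b)
  rw [Ig, Ig]; linarith

lemma exp_approx {x : ℝ} (h0 : 0 ≤ x) (h1 : x ≤ 1) :
    |Real.exp (-x) - (1 - x + x ^ 2 / 2 - x ^ 3 / 6)| ≤ x ^ 4 := by
  have hb := Real.exp_bound (x := -x) (by rwa [abs_neg, abs_of_nonneg h0]) (n := 4) (by norm_num)
  have hs : ∑ m ∈ Finset.range 4, (-x) ^ m / (m.factorial : ℝ) =
      1 - x + x ^ 2 / 2 - x ^ 3 / 6 := by
    simp [Finset.sum_range_succ, Nat.factorial]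
    ring
  rw [hs] at hb
  rw [abs_neg, abs_of_nonneg h0] at hb
  norm_num [Nat.factorial] at hb
  nlinarith [pow_nonneg h0 4]

lemma Ig_approx {z : ℝ} (hz : |z| ≤ 1) :
    |Ig z - (z - z ^ 3 / 3 + z ^ 5 / 10 - z ^ 7 / 42)| ≤ |z| ^ 9 := by
  have hpc : Continuous fun t : ℝ => 1 - t ^ 2 + t ^ 4 / 2 - t ^ 6 / 6 := by continuity
  have hderiv : ∀ t ∈ Set.uIcc (0:ℝ) z,
      HasDerivAt (fun t : ℝ => t - t ^ 3 / 3 + t ^ 5 / 10 - t ^ 7 / 42)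
        (1 - t ^ 2 + t ^ 4 / 2 - t ^ 6 / 6) t := by
    intro t _
    have h := (((hasDerivAt_id t).sub ((hasDerivAt_pow 3 t).div_const 3)).add
        ((hasDerivAt_pow 5 t).div_const 10)).sub ((hasDerivAt_pow 7 t).div_const 42)
    refine h.congr_deriv ?_
    push_cast
    ring
  have hpoly : ∫ t in (0:ℝ)..z, (1 - t ^ 2 + t ^ 4 / 2 - t ^ 6 / 6) =
      z - z ^ 3 / 3 + z ^ 5 / 10 - z ^ 7 / 42 := by
    rw [intervalIntegral.integral_eq_sub_of_hasDerivAt hderiv (hpc.intervalIntegrable 0 z)]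
    ring
  have hsub : Ig z - (z - z ^ 3 / 3 + z ^ 5 / 10 - z ^ 7 / 42)
      = ∫ t in (0:ℝ)..z,
          (Real.exp (-t ^ 2) - (1 - t ^ 2 + t ^ 4 / 2 - t ^ 6 / 6)) := by
    rw [intervalIntegral.integral_sub (intg 0 z) (hpc.intervalIntegrable 0 z), Ig, hpoly]
  rw [hsub]
  have hbound : ∀ x ∈ Set.uIoc (0:ℝ) z,
      ‖Real.exp (-x ^ 2) - (1 - x ^ 2 + (x ^ 2) ^ 2 / 2 - (x ^ 2) ^ 3 / 6)‖ ≤ |z| ^ 8 := by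
    intro x hmem
    have hx : |x| ≤ |z| := by
      rw [Set.mem_uIoc] at hmem
      rcases hmem with ⟨h1, h2⟩ | ⟨h1, h2⟩ <;> rw [abs_le] <;> constructor <;>
        nlinarith [le_abs_self z, neg_abs_le z]
    have hx2 : x ^ 2 ≤ 1 := by nlinarith [sq_abs x, sq_abs z, abs_nonneg x, abs_nonneg z]
    have := exp_approx (x := x ^ 2) (sq_nonneg x) hx2
    have hpow : (x ^ 2) ^ 4 ≤ |z| ^ 8 := by
      have h1 := pow_le_pow_left₀ (abs_nonneg x) hx 8
      have h8 : (x ^ 2) ^ 4 = |x| ^ 8 := by rw [← sq_abs x]; ring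
      linarith
    calc ‖Real.exp (-x ^ 2) - (1 - x ^ 2 + (x ^ 2) ^ 2 / 2 - (x ^ 2) ^ 3 / 6)‖
        ≤ (x ^ 2) ^ 4 := this
      _ ≤ |z| ^ 8 := hpow
  have hmain := intervalIntegral.norm_integral_le_of_norm_le_const hbound
  have heq : (fun x : ℝ => Real.exp (-x ^ 2) - (1 - x ^ 2 + (x ^ 2) ^ 2 / 2 - (x ^ 2) ^ 3 / 6))
      = fun t : ℝ => Real.exp (-t ^ 2) - (1 - t ^ 2 + t ^ 4 / 2 - t ^ 6 / 6) := by
    funext t; ring_nf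
  rw [heq] at hmain
  calc |∫ t in (0:ℝ)..z, (Real.exp (-t ^ 2) - (1 - t ^ 2 + t ^ 4 / 2 - t ^ 6 / 6))|
      ≤ |z| ^ 8 * |z - 0| := hmain
    _ = |z| ^ 9 := by rw [sub_zero]; ring

end Stmt16Aux

open Stmt16Aux

set_option maxHeartbeats 2000000 in
theorem stmt_16 (lam : ℝ) (hlam : lam ≠ 0) :
    (∀ x₀ c Δx : ℝ, 0 < Δx →
      ∫ ξ in x₀..(x₀ + Δx), Real.exp (-lam ^ 2 * (ξ - c) ^ 2) =
        (Real.sqrt π / (2 * lam)) * (erf (lam * (x₀ + Δx - c)) - erf (lam * (x₀ - c)))) ∧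
    (∃ C > 0, ∃ δ > 0, ∀ dx : ℝ, 0 < dx → dx < δ →
      |2 * lam * dx * Real.exp (-lam ^ 2 * dx ^ 2 / 4) /
          (Real.sqrt π * (erf (lam * dx / 2) + erf (3 * lam * dx / 2)))
        - (1 / 2 + lam ^ 2 * dx ^ 2 / 6 - 7 * lam ^ 4 * dx ^ 4 / 90)| ≤ C * dx ^ 6) := by
  have hπ : Real.sqrt π ≠ 0 := ne_of_gt (Real.sqrt_pos.2 Real.pi_pos)
  constructor
  · intro x₀ c Δx hΔx
    have h1 : (∫ ξ in x₀..(x₀ + Δx), Real.exp (-lam ^ 2 * (ξ - c) ^ 2))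
        = ∫ ξ in x₀..(x₀ + Δx), (fun y => Real.exp (-(lam * y) ^ 2)) (ξ - c) := by
      congr 1
      funext ξ
      ring_nf
    rw [h1, intervalIntegral.integral_comp_sub_right (fun y => Real.exp (-(lam * y) ^ 2)) c,
      intervalIntegral.integral_comp_mul_left (fun t => Real.exp (-t ^ 2)) hlam]
    rw [Ig_sub]
    rw [erf, erf, ← Ig, ← Ig]
    have : lam * (x₀ + Δx - c) = lam * (x₀ + Δx - c) := rfl
    rw [smul_eq_mul]
    have h2 : x₀ + Δx - c = (x₀ + Δx) - c := by ring
    field_simp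
  · have hlpos : 0 < |lam| := abs_pos.2 hlam
    refine ⟨11 * |lam| ^ 6, by positivity, 1 / (2 * |lam|), by positivity, ?_⟩
    intro dx hdx hδ
    set u := lam * dx with hu
    have hune : u ≠ 0 := mul_ne_zero hlam (ne_of_gt hdx)
    have huabs : |u| ≤ 1 / 2 := by
      rw [hu, abs_mul, abs_of_pos hdx]
      calc |lam| * dx ≤ |lam| * (1 / (2 * |lam|)) :=
            mul_le_mul_of_nonneg_left (le_of_lt hδ) (abs_nonneg lam)
        _ = 1 / 2 := by field_simp
    have hu2 : u ^ 2 ≤ 1 / 4 := by nlinarith [sq_abs u, abs_nonneg u]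
    have hu4 : u ^ 4 ≤ 1 / 16 := by nlinarith [sq_nonneg u]
    have hu6 : u ^ 6 ≤ 1 / 64 := by nlinarith [sq_nonneg u, sq_nonneg (u ^ 2)]
    have hu7 : |u| ^ 7 ≤ |u| / 64 := by
      have : |u| ^ 7 = |u| * (u ^ 2) ^ 3 := by rw [← sq_abs u]; ring
      nlinarith [abs_nonneg u, sq_nonneg u, sq_nonneg (u ^ 2)]
    have hu9 : |u| ^ 9 ≤ |u| ^ 7 / 4 := by
      have h1 : |u| ^ 9 = |u| ^ 7 * |u| ^ 2 := by ring
      have h2 : |u| ^ 2 ≤ 1 / 4 := by rw [sq_abs]; exact hu2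
      nlinarith [pow_nonneg (abs_nonneg u) 7]
    -- abbreviations
    set N := 2 * u * Real.exp (-(u ^ 2 / 4)) with hNdef
    set D := 2 * Ig (u / 2) + 2 * Ig (3 * u / 2) with hDdef
    set Np := 2 * u - u ^ 3 / 2 + u ^ 5 / 16 - u ^ 7 / 192 with hNpdef
    set Qp := 4 * u - 7 / 3 * u ^ 3 + 61 / 40 * u ^ 5 - 547 / 672 * u ^ 7 with hQpdef
    set P := 1 / 2 + u ^ 2 / 6 - 7 / 90 * u ^ 4 with hPdef
    -- rewrite the target in terms of N, D
    have hNeq : 2 * lam * dx * Real.exp (-lam ^ 2 * dx ^ 2 / 4) = N := by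
      rw [hNdef, hu]
      have : -lam ^ 2 * dx ^ 2 / 4 = -((lam * dx) ^ 2 / 4) := by ring
      rw [this]
      ring
    have hDeq : Real.sqrt π * (erf (lam * dx / 2) + erf (3 * lam * dx / 2)) = D := by
      rw [hDdef, erf, erf, ← Ig, ← Ig, hu]
      have e1 : lam * dx / 2 = lam * dx / 2 := rfl
      field_simp
    have hPeq : 1 / 2 + lam ^ 2 * dx ^ 2 / 6 - 7 * lam ^ 4 * dx ^ 4 / 90 = P := by
      rw [hPdef, hu]; ring
    rw [hNeq, hDeq, hPeq]
    -- approximation of N by Np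
    have hA : |N - Np| ≤ |u| ^ 7 / 128 := by
      have hx2 : u ^ 2 / 4 ≤ 1 := by nlinarith
      have he := exp_approx (x := u ^ 2 / 4) (by positivity) hx2
      have hfact : N - Np = 2 * u * (Real.exp (-(u ^ 2 / 4)) -
          (1 - u ^ 2 / 4 + (u ^ 2 / 4) ^ 2 / 2 - (u ^ 2 / 4) ^ 3 / 6)) := by
        rw [hNdef, hNpdef]; ring
      rw [hfact, abs_mul, abs_mul]
      have h9 : |(2:ℝ)| * |u| * ((u ^ 2 / 4) ^ 4) = |u| ^ 9 / 128 := by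
        rw [abs_two, ← sq_abs u]; ring
      calc |(2:ℝ)| * |u| * |Real.exp (-(u ^ 2 / 4)) -
            (1 - u ^ 2 / 4 + (u ^ 2 / 4) ^ 2 / 2 - (u ^ 2 / 4) ^ 3 / 6)|
          ≤ |(2:ℝ)| * |u| * ((u ^ 2 / 4) ^ 4) := by
            apply mul_le_mul_of_nonneg_left he (by positivity)
        _ = |u| ^ 9 / 128 := h9
        _ ≤ |u| ^ 7 / 128 := by linarith [pow_nonneg (abs_nonneg u) 7]
    -- approximation of D by Qp
    have hB : |D - Qp| ≤ 20 * |u| ^ 7 := by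
      have habs3 : |3 * u / 2| = 3 * |u| / 2 := by
        rw [abs_div, abs_mul, abs_two]
        norm_num
      have hz1 : |u / 2| ≤ 1 := by rw [abs_div, abs_two]; linarith
      have hz2 : |3 * u / 2| ≤ 1 := by rw [habs3]; linarith
      have h1 := Ig_approx hz1
      have h2 := Ig_approx hz2
      have e1 : |u / 2| ^ 9 = |u| ^ 9 / 512 := by rw [abs_div, abs_two]; ring
      have e2 : |3 * u / 2| ^ 9 = 19683 * |u| ^ 9 / 512 := by rw [habs3]; ring
      rw [e1] at h1
      rw [e2] at h2
      set A := Ig (u / 2) - (u / 2 - (u / 2) ^ 3 / 3 + (u / 2) ^ 5 / 10 - (u / 2) ^ 7 / 42)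
        with hAdef
      set B := Ig (3 * u / 2) - (3 * u / 2 - (3 * u / 2) ^ 3 / 3 + (3 * u / 2) ^ 5 / 10
          - (3 * u / 2) ^ 7 / 42) with hBdef
      have hsplit : D - Qp = 2 * A + 2 * B := by rw [hDdef, hAdef, hBdef, hQpdef]; ring
      have htri : |D - Qp| ≤ 2 * |A| + 2 * |B| := by
        rw [hsplit]
        have h := abs_add_le (2 * A) (2 * B)
        rw [abs_mul, abs_mul, abs_two] at h
        exact h
      have hfin : 2 * (|u| ^ 9 / 512) + 2 * (19683 * |u| ^ 9 / 512) ≤ 20 * |u| ^ 7 := by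
        linarith [pow_nonneg (abs_nonneg u) 7, hu9]
      linarith
    -- polynomial identity: Np close to P * Qp
    have hC : |Np - P * Qp| ≤ |u| ^ 7 := by
      have hfac : Np - P * Qp =
          u ^ 7 * (-(32 / 945) + 25631 / 100800 * u ^ 2 - 547 / 8640 * u ^ 4) := by
        rw [hNpdef, hPdef, hQpdef]; ring
      rw [hfac, abs_mul, abs_pow]
      have hR : |(-(32 / 945) + 25631 / 100800 * u ^ 2 - 547 / 8640 * u ^ 4 : ℝ)| ≤ 1 := by
        rw [abs_le]
        constructor <;> nlinarith [sq_nonneg u, sq_nonneg (u ^ 2)]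
      calc |u| ^ 7 * |(-(32 / 945) + 25631 / 100800 * u ^ 2 - 547 / 8640 * u ^ 4 : ℝ)|
          ≤ |u| ^ 7 * 1 := mul_le_mul_of_nonneg_left hR (by positivity)
        _ = |u| ^ 7 := mul_one _
    -- lower bound on |D|
    have hQlow : 3 * |u| ≤ |Qp| := by
      have hfac : Qp = u * (4 - 7 / 3 * u ^ 2 + 61 / 40 * u ^ 4 - 547 / 672 * u ^ 6) := by
        rw [hQpdef]; ring
      have hin : (3:ℝ) ≤ 4 - 7 / 3 * u ^ 2 + 61 / 40 * u ^ 4 - 547 / 672 * u ^ 6 := by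
        nlinarith [sq_nonneg u, sq_nonneg (u ^ 2)]
      have hin' : (3:ℝ) ≤ |4 - 7 / 3 * u ^ 2 + 61 / 40 * u ^ 4 - 547 / 672 * u ^ 6| :=
        le_trans hin (le_abs_self _)
      calc 3 * |u| = |u| * 3 := by ring
        _ ≤ |u| * |4 - 7 / 3 * u ^ 2 + 61 / 40 * u ^ 4 - 547 / 672 * u ^ 6| :=
            mul_le_mul_of_nonneg_left hin' (abs_nonneg u)
        _ = |u * (4 - 7 / 3 * u ^ 2 + 61 / 40 * u ^ 4 - 547 / 672 * u ^ 6)| :=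
            (abs_mul u _).symm
        _ = |Qp| := by rw [hfac]
    have hDlow : 2 * |u| ≤ |D| := by
      have h1 : |Qp| - |D| ≤ |Qp - D| := abs_sub_abs_le_abs_sub _ _
      have h2 : |Qp - D| = |D - Qp| := abs_sub_comm _ _
      have h3 : 20 * |u| ^ 7 ≤ |u| := by nlinarith [abs_nonneg u]
      linarith
    have hDne : D ≠ 0 := by
      intro h
      rw [h, abs_zero] at hDlow
      have := abs_pos.2 hune
      linarith
    -- bound on |P|
    have hPb : |P| ≤ 1 := by
      rw [hPdef, abs_le]
      constructor <;> nlinarith [sq_nonneg u, sq_nonneg (u ^ 2)]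
    -- final combination
    have hkey : N / D - P = (N - P * D) / D := by field_simp
    have hnum : |N - P * D| ≤ 22 * |u| ^ 7 := by
      have hsplit : N - P * D = (N - Np) + (Np - P * Qp) + P * (Qp - D) := by ring
      have hPQ : |P * (Qp - D)| ≤ 20 * |u| ^ 7 := by
        rw [abs_mul, abs_sub_comm Qp D]
        calc |P| * |D - Qp| ≤ 1 * (20 * |u| ^ 7) :=
              mul_le_mul hPb hB (abs_nonneg _) zero_le_one
          _ = 20 * |u| ^ 7 := by ring
      calc |N - P * D| = |(N - Np) + (Np - P * Qp) + P * (Qp - D)| := by rw [hsplit]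
        _ ≤ |(N - Np) + (Np - P * Qp)| + |P * (Qp - D)| := abs_add_le _ _
        _ ≤ |N - Np| + |Np - P * Qp| + |P * (Qp - D)| := by
            have := abs_add_le (N - Np) (Np - P * Qp); linarith
        _ ≤ |u| ^ 7 / 128 + |u| ^ 7 + 20 * |u| ^ 7 := by linarith
        _ ≤ 22 * |u| ^ 7 := by nlinarith [pow_nonneg (abs_nonneg u) 7]
    have hupos : 0 < |u| := abs_pos.2 hune
    have hfinal : |N / D - P| ≤ 11 * |u| ^ 6 := by
      rw [hkey, abs_div]
      calc |N - P * D| / |D| ≤ 22 * |u| ^ 7 / (2 * |u|) := by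
            apply div_le_div₀ (by positivity) hnum (by positivity) hDlow
        _ = 11 * |u| ^ 6 := by
            field_simp
            ring
    have hu6eq : |u| ^ 6 = |lam| ^ 6 * dx ^ 6 := by
      rw [hu, abs_mul, abs_of_pos hdx]; ring
    calc |N / D - P| ≤ 11 * |u| ^ 6 := hfinal
      _ = 11 * |lam| ^ 6 * dx ^ 6 := by rw [hu6eq]; ring
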